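/- Weak types quantify evaluation: if a machine state (S_A, M, ε) is weakly typeable with weight n and type ε ⇒ ι⃗, then there exists a memory T_A weakly typeable with type ι⃗ and weight m such that S_A, M ⇓_k T_A with n = m + k. -/
import Mathlib


/-- Terms of the Functional Machine Calculus. -/
inductive Tm : Type
| var : ℕ → Tm
| pop : ℕ → ℕ → Tm → Tm      -- a<x>.M
| push : Tm → ℕ → Tm → Tm    -- [N]a.M
| skip : Tm
| seq : Tm → Tm → Tm
deriving DecidableEq

open Tm

/-- Free variables. -/
def fv : Tm → Finset ℕ
| Tm.var y => {y}
| Tm.pop _ y M => (fv M).erase y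
| Tm.push N _ M => fv N ∪ fv M
| Tm.skip => ∅
| Tm.seq M N => fv M ∪ fv N

/-- Substitution {N/x}M. -/
def subst (x : ℕ) (N : Tm) : Tm → Tm
| Tm.var y => if y = x then N else Tm.var y
| Tm.pop a y M => if y = x then Tm.pop a y M else Tm.pop a y (subst x N M)
| Tm.push P a M => Tm.push (subst x N P) a (subst x N M)
| Tm.skip => Tm.skip
| Tm.seq M P => Tm.seq (subst x N M) (subst x N P)

/-- A memory: a family of stacks of terms, indexed by locations. -/
abbrev Mem := ℕ → List Tm

def emptyMem : Mem := fun _ => []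

/-- Push a term onto stack `a` of a memory. -/
def pushMem (S : Mem) (a : ℕ) (N : Tm) : Mem := Function.update S a (N :: S a)

/-- Machine states: memory, term, continuation stack. -/
abbrev MState := Mem × Tm × List Tm

/-- Machine transitions. -/
inductive Step : MState → MState → Prop
| push : Step (S, Tm.push N a M, K) (pushMem S a N, M, K)
| pop  : Step (pushMem S a N, Tm.pop a x M, K) (S, subst x N M, K)
| seq  : Step (S, Tm.seq M N, K) (S, M, N :: K)
| skip : Step (S, Tm.skip, M :: K) (S, M, K)

/-- Runs, measured by the number of states traversed (length ≥ 1). -/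
inductive Runs : ℕ → MState → MState → Prop
| single : Runs 1 s s
| step : Step s t → Runs n t u → Runs (n+1) s u

/-- Quantified big-step evaluation. -/
inductive Eval : Mem → Tm → ℕ → Mem → Prop
| skip : Eval S Tm.skip 1 S
| seq : Eval R M m S → Eval S N n T → Eval R (Tm.seq M N) (m+n+1) T
| push : Eval (pushMem S a N) M n T → Eval S (Tm.push N a M) (n+1) T
| pop : Eval S (subst x N M) n T → Eval (pushMem S a N) (Tm.pop a x M) (n+1) T

/-- The six reduction rules. -/
inductive Rule : Tm → Tm → Prop
| beta : Rule (Tm.push N a (Tm.pop a x M)) (subst x N M)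
| passage : a ≠ b → x ∉ fv N →
    Rule (Tm.push N b (Tm.pop a x M)) (Tm.pop a x (Tm.push N b M))
| next : Rule (Tm.seq Tm.skip M) M
| prefixPop : x ∉ fv M → Rule (Tm.seq (Tm.pop a x N) M) (Tm.pop a x (Tm.seq N M))
| prefixPush : Rule (Tm.seq (Tm.push P a N) M) (Tm.push P a (Tm.seq N M))
| assoc : Rule (Tm.seq (Tm.seq P N) M) (Tm.seq P (Tm.seq N M))

/-- The beta rule alone. -/
inductive BetaRule : Tm → Tm → Prop
| beta : BetaRule (Tm.push N a (Tm.pop a x M)) (subst x N M)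

/-- The five non-beta reduction rules. -/
inductive NBRule : Tm → Tm → Prop
| passage : a ≠ b → x ∉ fv N →
    NBRule (Tm.push N b (Tm.pop a x M)) (Tm.pop a x (Tm.push N b M))
| next : NBRule (Tm.seq Tm.skip M) M
| prefixPop : x ∉ fv M → NBRule (Tm.seq (Tm.pop a x N) M) (Tm.pop a x (Tm.seq N M))
| prefixPush : NBRule (Tm.seq (Tm.push P a N) M) (Tm.push P a (Tm.seq N M))
| assoc : NBRule (Tm.seq (Tm.seq P N) M) (Tm.seq P (Tm.seq N M))

/-- Rules flagged by whether they are beta/next (weight-decreasing) steps. -/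
inductive RuleK : Bool → Tm → Tm → Prop
| beta : RuleK true (Tm.push N a (Tm.pop a x M)) (subst x N M)
| next : RuleK true (Tm.seq Tm.skip M) M
| passage : a ≠ b → x ∉ fv N →
    RuleK false (Tm.push N b (Tm.pop a x M)) (Tm.pop a x (Tm.push N b M))
| prefixPop : x ∉ fv M → RuleK false (Tm.seq (Tm.pop a x N) M) (Tm.pop a x (Tm.seq N M))
| prefixPush : RuleK false (Tm.seq (Tm.push P a N) M) (Tm.push P a (Tm.seq N M))
| assoc : RuleK false (Tm.seq (Tm.seq P N) M) (Tm.seq P (Tm.seq N M))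

/-- Closure of a rule relation under all contexts. -/
inductive Clo (r : Tm → Tm → Prop) : Tm → Tm → Prop
| base : r M N → Clo r M N
| pop : Clo r M N → Clo r (Tm.pop a x M) (Tm.pop a x N)
| pushBody : Clo r M N → Clo r (Tm.push P a M) (Tm.push P a N)
| pushArg : Clo r M N → Clo r (Tm.push M a P) (Tm.push N a P)
| seqL : Clo r M N → Clo r (Tm.seq M P) (Tm.seq N P)
| seqR : Clo r M N → Clo r (Tm.seq P M) (Tm.seq P N)

/-- Closure of a rule relation under spine contexts (no argument position). -/
inductive SpineClo (r : Tm → Tm → Prop) : Tm → Tm → Prop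
| base : r M N → SpineClo r M N
| pop : SpineClo r M N → SpineClo r (Tm.pop a x M) (Tm.pop a x N)
| pushBody : SpineClo r M N → SpineClo r (Tm.push P a M) (Tm.push P a N)
| seqL : SpineClo r M N → SpineClo r (Tm.seq M P) (Tm.seq N P)
| seqR : SpineClo r M N → SpineClo r (Tm.seq P M) (Tm.seq P N)

/-- Computation types: implications between memory types; a memory type assigns
to each location a vector (list) of collection types, a collection type being
a finite collection (list, read as multiset) of computation types. -/
inductive Ty : Type
| arr : (ℕ → List (List Ty)) → (ℕ → List (List Ty)) → Ty

abbrev Coll := List Ty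
abbrev MemT := ℕ → List Coll

def emptyMT : MemT := fun _ => []

/-- Prepend collection ι at location a of a memory type. -/
def consAt (a : ℕ) (ι : Coll) (κ : MemT) : MemT :=
  fun b => if b = a then ι :: κ b else κ b

/-- Typing contexts assign collection types to variables. -/
abbrev Ctx := ℕ → Coll

def emptyCtx : Ctx := fun _ => []
def ctxAdd (Γ Δ : Ctx) : Ctx := fun x => Γ x ++ Δ x
def singleCtx (x : ℕ) (ι : Coll) : Ctx := fun y => if y = x then ι else []

mutual
/-- Weak quantitative typing of terms, with weight. -/
inductive WT : Ctx → Tm → Ty → ℕ → Prop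
| var : WT (singleCtx x [t]) (Tm.var x) t 0
| abs : WT Γ M (Ty.arr κ μ) n →
    WT (Function.update Γ x []) (Tm.pop a x M) (Ty.arr (consAt a (Γ x) κ) μ) (n+1)
| app : WTC Γ N ι n → WT Δ M (Ty.arr (consAt a ι κ) μ) m →
    WT (ctxAdd Γ Δ) (Tm.push N a M) (Ty.arr κ μ) (n+m+1)
| unit : WT emptyCtx Tm.skip (Ty.arr ι ι) 1
| seq : WT Γ M (Ty.arr ι κ) n → WT Δ N (Ty.arr κ μ) m →
    WT (ctxAdd Γ Δ) (Tm.seq M N) (Ty.arr ι μ) (n+m+1)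
/-- Weak typing of a term by a collection type (the collection rule). -/
inductive WTC : Ctx → Tm → Coll → ℕ → Prop
| nil : WTC emptyCtx M [] 0
| cons : WT Γ M t n → WTC Δ M ts m → WTC (ctxAdd Γ Δ) M (t :: ts) (n+m)
end

mutual
/-- Strong quantitative typing of terms, with weight. -/
inductive StrT : Ctx → Tm → Ty → ℕ → Prop
| var : StrT (singleCtx x [t]) (Tm.var x) t 0
| abs : StrT Γ M (Ty.arr κ μ) n →
    StrT (Function.update Γ x []) (Tm.pop a x M) (Ty.arr (consAt a (Γ x) κ) μ) (n+1)
| app : StrTC Γ N ι n → StrT Δ M (Ty.arr (consAt a ι κ) μ) m → StrT E N t k →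
    StrT (ctxAdd (ctxAdd Γ Δ) E) (Tm.push N a M) (Ty.arr κ μ) (n+m+k+1)
| unit : StrT emptyCtx Tm.skip (Ty.arr ι ι) 1
| seq : StrT Γ M (Ty.arr ι κ) n → StrT Δ N (Ty.arr κ μ) m →
    StrT (ctxAdd Γ Δ) (Tm.seq M N) (Ty.arr ι μ) (n+m+1)
| weak : StrT Γ M t n → StrT (ctxAdd Γ Δ) M t n
/-- Strong typing of a term by a collection type. -/
inductive StrTC : Ctx → Tm → Coll → ℕ → Prop
| nil : StrTC emptyCtx M [] 0
| cons : StrT Γ M t n → StrTC Δ M ts m → StrTC (ctxAdd Γ Δ) M (t :: ts) (n+m)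
end

/-- Weak typing of a single stack. -/
inductive WStk : List Tm → List Coll → ℕ → Prop
| nil : WStk [] [] 0
| cons : WTC emptyCtx N ν n → WStk S ι m → WStk (N :: S) (ν :: ι) (n+m)

/-- Weak typing of a memory: each stack typed, with finitely-supported weights. -/
def WM (S : Mem) (ι : MemT) (n : ℕ) : Prop :=
  ∃ w : ℕ → ℕ, (∀ a, WStk (S a) (ι a) (w a)) ∧
    ∃ l : Finset ℕ, (∀ a ∉ l, w a = 0) ∧ n = ∑ a ∈ l, w a

/-- Weak typing of a continuation stack. -/
inductive WK : List Tm → Ty → ℕ → Prop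
| nil : WK [] (Ty.arr ι ι) 0
| cons : WT emptyCtx M (Ty.arr ι κ) n → WK K (Ty.arr κ μ) m →
    WK (M :: K) (Ty.arr ι μ) (n+m)

/-- Weak typing of a machine state, with type ε ⇒ μ⃗. -/
inductive WS : MState → MemT → ℕ → Prop
| mk : WM S ι n → WT emptyCtx M (Ty.arr ι κ) m → WK K (Ty.arr κ μ) k →
    WS (S, M, K) μ (n+m+k)

mutual
/-- Spine normal forms W. -/
inductive SpNF : Tm → Prop
| abs : SpNF M → SpNF (Tm.pop a x M)
| ofV : SpNFV M → SpNF M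
/-- Spine normal forms V (those that are not abstractions). -/
inductive SpNFV : Tm → Prop
| push : SpNFV M → SpNFV (Tm.push N a M)
| seq : SpNF M → SpNFV (Tm.seq (Tm.var x) M)
| var : SpNFV (Tm.var x)
| skip : SpNFV Tm.skip
end

mutual
/-- Normal forms of full reduction. -/
inductive NF : Tm → Prop
| abs : NF M → NF (Tm.pop a x M)
| ofV : NFV M → NF M
inductive NFV : Tm → Prop
| push : NF N → NFV M → NFV (Tm.push N a M)
| seq : NF M → NFV (Tm.seq (Tm.var x) M)
| var : NFV (Tm.var x)
| skip : NFV Tm.skip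
end

/-- A weak head context of applications, applied to a term. -/
def apps : List (Tm × ℕ) → Tm → Tm
| [], M => M
| (N, a) :: l, M => Tm.push N a (apps l M)

/-- The memory generated by executing a sequence of pushes. -/
def memOf (l : List (Tm × ℕ)) : Mem :=
  l.foldl (fun S p => pushMem S p.2 p.1) emptyMem

mutual
/-- Perpetual evaluation. -/
inductive Perp : Tm → Tm → Prop
| beta : Perp (apps l (subst x N M)) P → Perp N Q →
    Perp (apps l (Tm.push N a (Tm.pop a x M))) P
| passage : a ≠ b → x ∉ fv N →
    Perp (apps l (Tm.pop a x (Tm.push N b M))) P →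
    Perp (apps l (Tm.push N b (Tm.pop a x M))) P
| next : Perp (apps l M) P → Perp (apps l (Tm.seq Tm.skip M)) P
| prefixPop : x ∉ fv M → Perp (apps l (Tm.pop a x (Tm.seq N M))) P →
    Perp (apps l (Tm.seq (Tm.pop a x N) M)) P
| prefixPush : Perp (apps l (Tm.push Q a (Tm.seq N M))) P →
    Perp (apps l (Tm.seq (Tm.push Q a N) M)) P
| assoc : Perp (apps l (Tm.seq Q (Tm.seq N M))) P →
    Perp (apps l (Tm.seq (Tm.seq Q N) M)) P
| abs : Perp M P → Perp (Tm.pop a x M) (Tm.pop a x P)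
| unit : PerpL l l' → Perp (apps l Tm.skip) (apps l' Tm.skip)
| var : PerpL l l' → Perp (apps l (Tm.var x)) (apps l' (Tm.var x))
| seqvar : PerpL l l' → Perp M P →
    Perp (apps l (Tm.seq (Tm.var x) M)) (apps l' (Tm.seq (Tm.var x) P))
/-- Pointwise perpetual evaluation of weak head contexts. -/
inductive PerpL : List (Tm × ℕ) → List (Tm × ℕ) → Prop
| nil : PerpL [] []
| cons : Perp N P → PerpL l l' → PerpL ((N, a) :: l) ((P, a) :: l')
end

/-- Memories of dimension d (over a finite set of locations A). -/
def MemDim (A : Finset ℕ) : ℕ → Mem → Prop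
| 0 => fun S => ∀ a ∉ A, S a = []
| d+1 => fun S => (∀ a ∉ A, S a = []) ∧
    ∀ a ∈ A, d + 1 ≤ (S a).length ∧
      ∀ N ∈ S a, ∃ l, N = apps l Tm.skip ∧ MemDim A d (memOf l)

/-- Terms of dimension d: a sequence of pushes ending in skip generating a
memory of dimension d. -/
def TmDim (A : Finset ℕ) (d : ℕ) (M : Tm) : Prop :=
  ∃ l, M = apps l Tm.skip ∧ MemDim A d (memOf l)

/-- Simultaneous substitution by a substitution map. -/
def msubst (σ : ℕ → Tm) : Tm → Tm
| Tm.var y => σ y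
| Tm.pop a y M => Tm.pop a y (msubst (Function.update σ y (Tm.var y)) M)
| Tm.push N a M => Tm.push (msubst σ N) a (msubst σ M)
| Tm.skip => Tm.skip
| Tm.seq M N => Tm.seq (msubst σ M) (msubst σ N)
lemma ctxAdd_eq_empty {Γ Δ : Ctx} (h : ctxAdd Γ Δ = emptyCtx) :
    Γ = emptyCtx ∧ Δ = emptyCtx := by
  constructor <;> funext y <;> have h' := congrFun h y <;>
    simp [ctxAdd, emptyCtx] at h' ⊢ <;> tauto

lemma wtc_nil_inv {Γ N p} (h : WTC Γ N [] p) : Γ = emptyCtx ∧ p = 0 := by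
  cases h; exact ⟨rfl, rfl⟩

lemma wtc_split {N : Tm} {ν₁ ν₂ : Coll} {p : ℕ} (h : WTC emptyCtx N (ν₁ ++ ν₂) p) :
    ∃ p₁ p₂, WTC emptyCtx N ν₁ p₁ ∧ WTC emptyCtx N ν₂ p₂ ∧ p = p₁ + p₂ := by
  induction ν₁ generalizing p with
  | nil => exact ⟨0, p, WTC.nil, h, by omega⟩
  | cons t ts ih =>
    generalize hE : emptyCtx = E at h
    cases h with
    | cons h1 h2 =>
      rename_i Γ n Δ m
      obtain ⟨hΓ, hΔ⟩ := ctxAdd_eq_empty hE.symm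
      subst hΓ; subst hΔ
      obtain ⟨p₁, p₂, hp₁, hp₂, hpeq⟩ := ih h2
      refine ⟨n + p₁, p₂, ?_, hp₂, by omega⟩
      have h3 := WTC.cons h1 hp₁
      have : ctxAdd emptyCtx emptyCtx = emptyCtx := by
        funext y; simp [ctxAdd, emptyCtx]
      rwa [this] at h3

lemma ctxAdd_update {Γ Δ : Ctx} {x : ℕ} :
    ctxAdd (Function.update Γ x []) (Function.update Δ x []) =
      Function.update (ctxAdd Γ Δ) x [] := by
  funext y
  by_cases hy : y = x <;> simp [ctxAdd, Function.update, hy]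

lemma update_empty (x : ℕ) : Function.update (emptyCtx) x ([] : Coll) = emptyCtx := by
  funext y; by_cases hy : y = x <;> simp [Function.update, emptyCtx, hy]

lemma wtc_subst_aux (M : Tm) (x : ℕ) (N : Tm)
    (hA : ∀ (Γ : Ctx) (t : Ty) (n p : ℕ), WT Γ M t n → WTC emptyCtx N (Γ x) p →
      WT (Function.update Γ x []) (subst x N M) t (n + p)) :
    ∀ (ν : Coll) (Γ : Ctx) (n p : ℕ), WTC Γ M ν n → WTC emptyCtx N (Γ x) p →
      WTC (Function.update Γ x []) (subst x N M) ν (n + p) := by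
  intro ν
  induction ν with
  | nil =>
    intro Γ n p hC hN
    obtain ⟨hΓ, hn⟩ := wtc_nil_inv hC
    subst hΓ; subst hn
    obtain ⟨-, hp⟩ := wtc_nil_inv hN
    subst hp
    rw [update_empty]
    exact WTC.nil
  | cons t ts ih =>
    intro Γ n p hC hN
    cases hC with
    | cons h1 h2 =>
      rename_i Γ₁ n₁ Δ₁ m₁
      have hadd : (ctxAdd Γ₁ Δ₁) x = Γ₁ x ++ Δ₁ x := rfl
      rw [hadd] at hN
      obtain ⟨p₁, p₂, hp₁, hp₂, hpeq⟩ := wtc_split hN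
      have hh1 := hA Γ₁ _ _ _ h1 hp₁
      have hh2 := ih Δ₁ _ _ h2 hp₂
      have h3 := WTC.cons hh1 hh2
      rw [ctxAdd_update] at h3
      have : n₁ + p₁ + (m₁ + p₂) = n₁ + m₁ + p := by omega
      rwa [this] at h3

lemma wt_subst : ∀ (M : Tm) (x : ℕ) (N : Tm) (Γ : Ctx) (t : Ty) (n p : ℕ),
    WT Γ M t n → WTC emptyCtx N (Γ x) p →
    WT (Function.update Γ x []) (subst x N M) t (n + p) := by
  intro M
  induction M with
  | var y =>
    intro x N Γ t n p hM hN
    cases hM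
    by_cases hy : y = x
    · subst hy
      simp only [singleCtx, if_pos rfl] at hN
      generalize hE : emptyCtx = E at hN
      generalize hL : [t] = L at hN
      cases hN with
      | nil => simp at hL
      | cons h1 h2 =>
        rename_i Γ' n' Δ' m'
        obtain ⟨hΓ, hΔ⟩ := ctxAdd_eq_empty hE.symm
        subst hΓ; subst hΔ
        injection hL with ht hts
        subst ht; subst hts
        obtain ⟨-, hm0⟩ := wtc_nil_inv h2
        subst hm0
        have hc : Function.update (singleCtx y [t]) y ([] : Coll) = emptyCtx := by
          funext z; by_cases hz : z = y <;>
            simp [Function.update, singleCtx, emptyCtx, hz]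
        rw [hc]
        simpa [subst] using h1
    · have hempty : (singleCtx y [t]) x = [] := by
        simp [singleCtx]; omega
      rw [hempty] at hN
      obtain ⟨-, hp0⟩ := wtc_nil_inv hN
      subst hp0
      have hc : Function.update (singleCtx y [t]) x ([] : Coll) = singleCtx y [t] := by
        funext z; by_cases hz : z = x
        · subst hz
          simp [Function.update, singleCtx]; omega
        · simp [Function.update, hz]
      rw [hc]
      simpa [subst, hy] using WT.var
  | pop a y M ih =>
    intro x N Γ t n p hM hN
    generalize hT : Tm.pop a y M = T at hM
    cases hM <;> try simp at hT
    rename_i Γ₀ M₀ κ₀ μ₀ n₀ x₀ a₀ hM₀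
    obtain ⟨h1, h2, h3⟩ := hT
    subst h1; subst h2; subst h3
    by_cases hy : y = x
    · subst hy
      have hempty : (Function.update Γ₀ y ([] : Coll)) y = [] := by
        simp [Function.update]
      rw [hempty] at hN
      obtain ⟨-, hp0⟩ := wtc_nil_inv hN
      subst hp0
      have := WT.abs (x := y) (a := a) hM₀
      simpa [subst, Function.update_idem] using this
    · have hx : (Function.update Γ₀ y ([] : Coll)) x = Γ₀ x :=
        Function.update_of_ne (fun h => hy h.symm) _ _
      rw [hx] at hN
      have hIH := ih x N Γ₀ _ _ _ hM₀ hN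
      have := WT.abs (x := y) (a := a) hIH
      rw [← Function.update_comm hy, Function.update_of_ne hy] at this
      simpa [subst, hy, Nat.add_right_comm] using this
  | push P a M ihP ihM =>
    intro x N Γ t n p hM hN
    generalize hT : Tm.push P a M = T at hM
    cases hM <;> try simp at hT
    rename_i Γ₁ N₁ ι₁ n₁ Δ₁ M₁ a₁ κ₁ μ₁ m₁ hP hM₁
    obtain ⟨h1, h2, h3⟩ := hT
    subst h1; subst h2; subst h3
    have hadd : (ctxAdd Γ₁ Δ₁) x = Γ₁ x ++ Δ₁ x := rfl
    rw [hadd] at hN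
    obtain ⟨p₁, p₂, hp₁, hp₂, hpeq⟩ := wtc_split hN
    have h1 := wtc_subst_aux P x N (fun Γ' t' n' p' => ihP x N Γ' t' n' p') _ _ _ _ hP hp₁
    have h2 := ihM x N Δ₁ _ _ _ hM₁ hp₂
    have h3 := WT.app h1 h2
    rw [ctxAdd_update] at h3
    have heq : n₁ + p₁ + (m₁ + p₂) + 1 = n₁ + m₁ + 1 + p := by omega
    rw [heq] at h3
    simpa [subst] using h3
  | skip =>
    intro x N Γ t n p hM hN
    cases hM
    rw [show (emptyCtx x) = ([] : Coll) from rfl] at hN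
    obtain ⟨-, hp0⟩ := wtc_nil_inv hN
    subst hp0
    rw [update_empty]
    simpa [subst] using WT.unit
  | seq M P ihM ihP =>
    intro x N Γ t n p hM hN
    generalize hT : Tm.seq M P = T at hM
    cases hM <;> try simp at hT
    rename_i Γ₁ M₁ ι₁ κ₁ n₁ Δ₁ N₁ μ₁ m₁ hM₁ hP₁
    obtain ⟨h1, h2⟩ := hT
    subst h1; subst h2
    have hadd : (ctxAdd Γ₁ Δ₁) x = Γ₁ x ++ Δ₁ x := rfl
    rw [hadd] at hN
    obtain ⟨p₁, p₂, hp₁, hp₂, hpeq⟩ := wtc_split hN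
    have h1 := ihM x N Γ₁ _ _ _ hM₁ hp₁
    have h2 := ihP x N Δ₁ _ _ _ hP₁ hp₂
    have h3 := WT.seq h1 h2
    rw [ctxAdd_update] at h3
    have heq : n₁ + p₁ + (m₁ + p₂) + 1 = n₁ + m₁ + 1 + p := by omega
    rw [heq] at h3
    simpa [subst] using h3

lemma wm_push {S : Mem} {ι : MemT} {wm a : ℕ} {N : Tm} {ν : Coll} {nn : ℕ}
    (h : WM S ι wm) (hN : WTC emptyCtx N ν nn) :
    WM (pushMem S a N) (consAt a ν ι) (wm + nn) := by
  obtain ⟨w, hw, l, hl, hsum⟩ := h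
  refine ⟨Function.update w a (nn + w a), ?_, insert a l, ?_, ?_⟩
  · intro b
    by_cases hb : b = a
    · subst hb
      simp only [pushMem, consAt, Function.update_self, if_pos rfl]
      exact WStk.cons hN (hw b)
    · simp only [pushMem, consAt, Function.update_of_ne hb, if_neg hb]
      exact hw b
  · intro b hb
    simp only [Finset.mem_insert, not_or] at hb
    rw [Function.update_of_ne hb.1]
    exact hl b hb.2
  · rw [Finset.sum_update_of_mem (Finset.mem_insert_self a l)]
    have h1 : ∑ b ∈ insert a l, w b = wm := by
      subst hsum
      by_cases ha : a ∈ l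
      · rw [Finset.insert_eq_self.2 ha]
      · rw [Finset.sum_insert ha, hl a ha, zero_add]
    have h2 := Finset.add_sum_erase (insert a l) w (Finset.mem_insert_self a l)
    rw [Finset.erase_eq] at h2
    omega

lemma wm_pop {S : Mem} {a : ℕ} {ν : Coll} {κ : MemT} {wm : ℕ}
    (h : WM S (consAt a ν κ) wm) :
    ∃ N S' nn m, S = pushMem S' a N ∧ WTC emptyCtx N ν nn ∧ WM S' κ m ∧
      wm = m + nn := by
  obtain ⟨w, hw, l, hl, hsum⟩ := h
  have hwa := hw a
  rw [show (consAt a ν κ) a = ν :: κ a by simp [consAt]] at hwa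
  generalize hS : S a = Sa at hwa
  generalize hW : w a = wa at hwa
  cases hwa with
  | cons hN hrest =>
    rename_i N nn rest mm
    refine ⟨N, Function.update S a rest, nn, ∑ b ∈ insert a l, Function.update w a mm b,
      ?_, hN, ⟨Function.update w a mm, ?_, insert a l, ?_, rfl⟩, ?_⟩
    · funext b
      by_cases hb : b = a
      · subst hb
        simp [pushMem, Function.update_self, hS]
      · simp [pushMem, Function.update_of_ne hb]
    · intro b
      by_cases hb : b = a
      · subst hb
        simpa [Function.update_self] using hrest
      · simp only [Function.update_of_ne hb]
        have := hw b
        rwa [show (consAt a ν κ) b = κ b by simp [consAt, hb]] at this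
    · intro b hb
      simp only [Finset.mem_insert, not_or] at hb
      rw [Function.update_of_ne hb.1]
      exact hl b hb.2
    · rw [Finset.sum_update_of_mem (Finset.mem_insert_self a l)]
      have h1 : ∑ b ∈ insert a l, w b = wm := by
        subst hsum
        by_cases ha : a ∈ l
        · rw [Finset.insert_eq_self.2 ha]
        · rw [Finset.sum_insert ha, hl a ha, zero_add]
      have h2 := Finset.add_sum_erase (insert a l) w (Finset.mem_insert_self a l)
      rw [Finset.erase_eq] at h2
      omega

lemma eval_pos {S : Mem} {M : Tm} {k : ℕ} {T : Mem} (h : Eval S M k T) : 1 ≤ k := by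
  cases h <;> omega

lemma key_lemma : ∀ (n : ℕ) (S : Mem) (M : Tm) (ι κ : MemT) (wm nt : ℕ),
    WM S ι wm → WT emptyCtx M (Ty.arr ι κ) nt → wm + nt = n →
    ∃ T m k, WM T κ m ∧ Eval S M k T ∧ n = m + k := by
  intro n
  induction n using Nat.strong_induction_on with
  | _ n ihn =>
  intro S M ι κ wm nt hS hM hn
  generalize hE : emptyCtx = E at hM
  generalize hA : Ty.arr ι κ = A at hM
  cases hM with
  | var =>
    rename_i x
    exact absurd (congrFun hE x) (by simp [emptyCtx, singleCtx])
  | abs hM₀ =>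
    rename_i Γ₀ M₀ κ₀ μ₀ n₀ x a
    injection hA with hι hκ
    subst hκ
    rw [hι] at hS
    obtain ⟨N, S', nn, m, hSp, hN, hS', hwm⟩ := wm_pop hS
    have hsub := wt_subst M₀ x N Γ₀ _ _ _ hM₀ hN
    rw [← hE] at hsub
    have hlt : m + (n₀ + nn) < n := by omega
    obtain ⟨T, m', k, hT, hEv, hnk⟩ := ihn _ hlt S' (subst x N M₀) κ₀ κ m (n₀ + nn) hS' hsub rfl
    refine ⟨T, m', k + 1, hT, ?_, by omega⟩
    rw [hSp]
    exact Eval.pop hEv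
  | app hP hM₁ =>
    rename_i Γ₁ N₁ ι₁ n₁ Δ₁ M₁ a κ₁ μ₁ m₁
    injection hA with hι hκ
    subst hι; subst hκ
    obtain ⟨hΓ, hΔ⟩ := ctxAdd_eq_empty hE.symm
    subst hΓ; subst hΔ
    have hS2 := wm_push (a := a) hS hP
    have hlt : wm + n₁ + m₁ < n := by omega
    obtain ⟨T, m', k, hT, hEv, hnk⟩ :=
      ihn _ hlt _ M₁ _ _ _ _ hS2 hM₁ rfl
    exact ⟨T, m', k + 1, hT, Eval.push hEv, by omega⟩
  | unit =>
    injection hA with hι hκ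
    subst hι; subst hκ
    exact ⟨S, wm, 1, hS, Eval.skip, by omega⟩
  | seq hM₁ hP₁ =>
    rename_i Γ₁ M₁ ι₁ κ₁ n₁ Δ₁ N₁ μ₁ m₁
    injection hA with hι hκ
    subst hι; subst hκ
    obtain ⟨hΓ, hΔ⟩ := ctxAdd_eq_empty hE.symm
    subst hΓ; subst hΔ
    have hlt1 : wm + n₁ < n := by omega
    obtain ⟨T₁, mm₁, k₁, hT₁, hEv₁, hnk₁⟩ := ihn _ hlt1 S M₁ _ _ _ _ hS hM₁ rfl
    have hk₁ := eval_pos hEv₁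
    have hlt2 : mm₁ + m₁ < n := by omega
    obtain ⟨T, mm₂, k₂, hT, hEv₂, hnk₂⟩ := ihn _ hlt2 T₁ N₁ _ _ _ _ hT₁ hP₁ rfl
    exact ⟨T, mm₂, k₁ + k₂ + 1, hT, Eval.seq hEv₁ hEv₂, by omega⟩

/-- Weak types quantify evaluation: a typed state (S, M, ε) of weight n and
type ε ⇒ μ⃗ evaluates, S, M ⇓_k T, with T typed by μ⃗ at weight m and n = m + k. -/
theorem weak_types_quantify_evaluation (S : Mem) (M : Tm) (μ : MemT) (n : ℕ)
    (h : WS (S, M, []) μ n) :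
    ∃ (T : Mem) (m k : ℕ), WM T μ m ∧ Eval S M k T ∧ n = m + k := by
  cases h with
  | mk hS hM hK =>
    rename_i ι nm κ mt kk
    generalize hA : Ty.arr κ μ = A at hK
    cases hK with
    | nil =>
      injection hA with h1 h2
      subst h1; subst h2
      exact key_lemma (nm + mt) S M _ _ nm mt hS hM rfl
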